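/- arXiv:2108.13179 — 4 statements merged into one kernel-verified Lean document; each statement's English description precedes it below -/
import Mathlib

section
/- For every ε with 0 < ε < 1/3, the value x = 2ε lies in [0,1], satisfies ε < x < 1 - ε, and yet max(0, ε - x) + max(0, x - 1 + ε) = 0 ∈ [0, ε]. -/
theorem stmt_3 (ε : ℝ) (hε : 0 < ε) (hε3 : ε < 1/3) :
    0 ≤ (2*ε) ∧ (2*ε) ≤ 1 ∧ ε < 2*ε ∧ 2*ε < 1 - ε ∧
    max 0 (ε - 2*ε) + max 0 (2*ε - 1 + ε) = 0 ∧
    (0:ℝ) ≤ 0 ∧ (0:ℝ) ≤ ε := by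
  refine ⟨by linarith, by linarith, by linarith, by linarith, ?_, le_refl 0, le_of_lt hε⟩
  rw [max_eq_left (by linarith), max_eq_left (by linarith)]
  ring
end

section
/- Let c, d > 0 be rationals and let D(x) = d - c·max(0, d·x) - c·max(0, -c·x). Then D(x) = 0 if and only if x = -d/c² or x = 1/c. -/
/-!
On `x ≥ 0` only the first ReLU is active and the gadget is the line `d * (1 - c * x)`, which
vanishes exactly at `1 / c`; on `x < 0` only the second one is active and it is the line
`d + c ^ 2 * x`, which vanishes exactly at `-d / c ^ 2`. Each root lies on its own half-line.
-/

section DiscGadget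

variable {K : Type*} [Field K] [LinearOrder K] [IsStrictOrderedRing K] {c d x : K}

lemma disc_eq_of_nonneg (hc : 0 < c) (hd : 0 < d) (hx : 0 ≤ x) :
    d - c * max 0 (d * x) - c * max 0 (-c * x) = d * (1 - c * x) := by
  rw [max_eq_right (by positivity), max_eq_left (by nlinarith)]
  ring

lemma disc_eq_of_neg (hc : 0 < c) (hd : 0 < d) (hx : x < 0) :
    d - c * max 0 (d * x) - c * max 0 (-c * x) = d + c ^ 2 * x := by
  rw [max_eq_left (by nlinarith), max_eq_right (by nlinarith)]
  ring

lemma disc_eq_zero_iff (hc : 0 < c) (hd : 0 < d) :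
    d - c * max 0 (d * x) - c * max 0 (-c * x) = 0 ↔ x = -d / c ^ 2 ∨ x = 1 / c := by
  have hroot_neg : -d / c ^ 2 < 0 := div_neg_of_neg_of_pos (neg_neg_of_pos hd) (by positivity)
  have hroot_pos : 0 < 1 / c := one_div_pos.mpr hc
  rcases le_or_gt 0 x with hx | hx
  · rw [disc_eq_of_nonneg hc hd hx, mul_eq_zero, or_iff_right hd.ne', sub_eq_zero,
      eq_div_iff hc.ne']
    constructor
    · intro h
      exact Or.inr (by linear_combination -h)
    · rintro (h | h)
      · exact absurd (h ▸ hx) hroot_neg.not_ge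
      · linear_combination -h
  · rw [disc_eq_of_neg hc hd hx, eq_div_iff (by positivity)]
    constructor
    · intro h
      exact Or.inl (by linear_combination h)
    · rintro (h | h)
      · linear_combination h
      · exact absurd (h ▸ hx) hroot_pos.not_gt

end DiscGadget

theorem stmt_8 (c d : ℚ) (hc : 0 < c) (hd : 0 < d) (x : ℝ) :
    (d : ℝ) - c * max 0 (d * x) - c * max 0 (-c * x) = 0 ↔
    x = -(d : ℝ) / c ^ 2 ∨ x = 1 / c :=
  disc_eq_zero_iff (by exact_mod_cast hc) (by exact_mod_cast hd)
end

section
/- Let c, d > 0 be rationals with c < 1 and define O_B(x₀,x₁,x₂) = d·c⁴ - c·max(0, d·c⁴ + c²·(x₀+x₁+x₂)). If x₀ = x₁ = x₂ = 0 then O_B = d·c⁴ - d·c⁵ ≠ d·c⁴; and if each xᵢ ∈ {0, -d·c} with at least one xᵢ = -d·c, then O_B = d·c⁴. -/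
theorem stmt_12 (c d : ℚ) (hc : 0 < c) (hc1 : c < 1) (hd : 0 < d) (x₀ x₁ x₂ : ℝ) :
    (x₀ = 0 ∧ x₁ = 0 ∧ x₂ = 0 →
      (d : ℝ) * c ^ 4 - c * max 0 ((d : ℝ) * c ^ 4 + c ^ 2 * (x₀ + x₁ + x₂))
        = d * c ^ 4 - d * c ^ 5 ∧
      (d : ℝ) * c ^ 4 - d * c ^ 5 ≠ d * c ^ 4) ∧
    ((∀ i ∈ [x₀, x₁, x₂], i = 0 ∨ i = -(d : ℝ) * c) →
      (x₀ = -(d : ℝ) * c ∨ x₁ = -(d : ℝ) * c ∨ x₂ = -(d : ℝ) * c) →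
      (d : ℝ) * c ^ 4 - c * max 0 ((d : ℝ) * c ^ 4 + c ^ 2 * (x₀ + x₁ + x₂))
        = d * c ^ 4) := by
  have hcR : (0:ℝ) < (c:ℝ) := by exact_mod_cast hc
  have hc1R : (c:ℝ) < 1 := by exact_mod_cast hc1
  have hdR : (0:ℝ) < (d:ℝ) := by exact_mod_cast hd
  constructor
  · rintro ⟨h0, h1, h2⟩
    subst h0 h1 h2
    have hpos : (0:ℝ) ≤ (d:ℝ) * c ^ 4 + (c:ℝ) ^ 2 * (0 + 0 + 0) := by positivity
    rw [max_eq_right hpos]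
    constructor
    · ring
    · intro h
      have : (d:ℝ) * c ^ 5 = 0 := by linarith
      have : (d:ℝ) * c ^ 5 > 0 := by positivity
      linarith
  · intro hall hone
    have h0 := hall x₀ (by simp)
    have h1 := hall x₁ (by simp)
    have h2 := hall x₂ (by simp)
    have hdc : (0:ℝ) < (d:ℝ) * c := by positivity
    have h0' : x₀ ≤ 0 := by rcases h0 with h | h <;> rw [h] <;> nlinarith
    have h1' : x₁ ≤ 0 := by rcases h1 with h | h <;> rw [h] <;> nlinarith
    have h2' : x₂ ≤ 0 := by rcases h2 with h | h <;> rw [h] <;> nlinarith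
    have hsum : x₀ + x₁ + x₂ ≤ -(d:ℝ) * c := by
      rcases hone with h | h | h <;> linarith [h0', h1', h2']
    have hneg : (d:ℝ) * c ^ 4 + (c:ℝ) ^ 2 * (x₀ + x₁ + x₂) ≤ 0 := by
      have hkey : (d:ℝ) * c ^ 4 ≤ (d:ℝ) * c ^ 3 := by
        have h := mul_nonneg (le_of_lt (mul_pos hdR (pow_pos hcR 3)))
          (by linarith : (0:ℝ) ≤ 1 - c)
        nlinarith
      have h2 := mul_le_mul_of_nonneg_left hsum (sq_nonneg (c:ℝ))
      nlinarith
    rw [max_eq_left hneg, mul_zero, sub_zero]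
end

section
/- Let φ be a 3-CNF formula with n variables and m clauses over propositional variables X₀,…,X_{n-1}. Define F : ℝⁿ → ℝ by F(x) = Σᵢ (max(0, 1/2 - xᵢ) + max(0, xᵢ - 1/2)) - Σⱼ max(0, 1 - Σ_{k=0}^{2} ℓ_{j,k}(x)), where ℓ_{j,k}(x) = x_{i} if the k-th literal of clause j is X_i and ℓ_{j,k}(x) = 1 - x_i if it is ¬X_i. Then there exists x ∈ [0,1]ⁿ with F(x) = n/2 if and only if φ is satisfiable. -/
/-- A 3-CNF clause literal: variable index and polarity (`true` = positive). -/
theorem stmt_19 (n m : ℕ)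
    (clause : Fin m → Fin 3 → Fin n × Bool) :
    (∃ x : Fin n → ℝ, (∀ i, 0 ≤ x i ∧ x i ≤ 1) ∧
      (∑ i, (max 0 (1/2 - x i) + max 0 (x i - 1/2))
        - ∑ j, max 0 (1 - ∑ k : Fin 3,
            (if (clause j k).2 then x (clause j k).1 else 1 - x (clause j k).1))
        = n / 2)) ↔
    (∃ I : Fin n → Bool, ∀ j, ∃ k : Fin 3,
      (if (clause j k).2 then I (clause j k).1 else !I (clause j k).1) = true) := by
  constructor
  · rintro ⟨x, hx, hF⟩
    have hAle : ∀ i ∈ Finset.univ, (max 0 (1/2 - x i) + max 0 (x i - 1/2)) ≤ (fun _ : Fin n => (1:ℝ)/2) i := by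
      intro i _
      have h1 := (hx i).1; have h2 := (hx i).2
      rcases max_cases 0 (1/2 - x i) with ⟨e1, _⟩ | ⟨e1, _⟩ <;>
        rcases max_cases 0 (x i - 1/2) with ⟨e2, _⟩ | ⟨e2, _⟩ <;>
        simp only [e1, e2] <;> linarith
    have hBnn : ∀ j ∈ Finset.univ, (0:ℝ) ≤ max 0 (1 - ∑ k : Fin 3,
        (if (clause j k).2 then x (clause j k).1 else 1 - x (clause j k).1)) := by
      intro j _; exact le_max_left _ _
    have hconst : ∑ _i : Fin n, (1:ℝ)/2 = n / 2 := by
      simp [Finset.sum_const, Finset.card_univ, nsmul_eq_mul]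
      ring
    have hsumA_le : ∑ i, (max 0 (1/2 - x i) + max 0 (x i - 1/2)) ≤ (n:ℝ)/2 := by
      calc _ ≤ ∑ _i : Fin n, (1:ℝ)/2 := Finset.sum_le_sum hAle
        _ = n/2 := hconst
    have hsumB_nn : (0:ℝ) ≤ ∑ j, max 0 (1 - ∑ k : Fin 3,
        (if (clause j k).2 then x (clause j k).1 else 1 - x (clause j k).1)) :=
      Finset.sum_nonneg hBnn
    have hsumA : ∑ i, (max 0 (1/2 - x i) + max 0 (x i - 1/2)) = (n:ℝ)/2 := by linarith
    have hsumB : ∑ j, max 0 (1 - ∑ k : Fin 3,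
        (if (clause j k).2 then x (clause j k).1 else 1 - x (clause j k).1)) = 0 := by linarith
    have hAeq : ∀ i, (max 0 (1/2 - x i) + max 0 (x i - 1/2)) = 1/2 := by
      intro i
      have := (Finset.sum_eq_sum_iff_of_le hAle).mp (by rw [hsumA, hconst]) i (Finset.mem_univ i)
      simpa using this
    have hBeq : ∀ j, max 0 (1 - ∑ k : Fin 3,
        (if (clause j k).2 then x (clause j k).1 else 1 - x (clause j k).1)) = 0 := by
      intro j
      exact (Finset.sum_eq_zero_iff_of_nonneg hBnn).mp hsumB j (Finset.mem_univ j)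
    have hx01 : ∀ i, x i = 0 ∨ x i = 1 := by
      intro i
      have h1 := (hx i).1; have h2 := (hx i).2
      have hA := hAeq i
      rcases max_cases 0 (1/2 - x i) with ⟨e1, f1⟩ | ⟨e1, f1⟩ <;>
        rcases max_cases 0 (x i - 1/2) with ⟨e2, f2⟩ | ⟨e2, f2⟩ <;>
        rw [e1, e2] at hA <;>
        first
          | (exfalso; linarith)
          | (left; linarith)
          | (right; linarith)
    refine ⟨fun i => decide (x i = 1), fun j => ?_⟩
    by_contra hcon
    push_neg at hcon
    have hS1 : (1:ℝ) ≤ ∑ k : Fin 3,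
        (if (clause j k).2 then x (clause j k).1 else 1 - x (clause j k).1) := by
      have := hBeq j
      rcases max_cases 0 (1 - ∑ k : Fin 3,
        (if (clause j k).2 then x (clause j k).1 else 1 - x (clause j k).1)) with ⟨e, f⟩ | ⟨e, f⟩
      · linarith
      · rw [e] at this; linarith
    have hzero : ∀ k : Fin 3,
        (if (clause j k).2 then x (clause j k).1 else 1 - x (clause j k).1) = 0 := by
      intro k
      have hk := hcon k
      by_cases hp : (clause j k).2 = true
      · rw [if_pos hp] at hk ⊢
        rcases hx01 (clause j k).1 with h | h
        · exact h
        · exact absurd (decide_eq_true h) hk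
      · rw [if_neg hp] at hk ⊢
        have h1 : x (clause j k).1 = 1 := by
          rcases hx01 (clause j k).1 with h | h
          · exfalso; apply hk; simp [h]
          · exact h
        linarith
    rw [Finset.sum_eq_zero (fun k _ => hzero k)] at hS1
    linarith
  · rintro ⟨I, hI⟩
    refine ⟨fun i => if I i then 1 else 0, fun i => by dsimp only; split_ifs <;> norm_num, ?_⟩
    have hA : ∀ i : Fin n,
        (max 0 ((1:ℝ)/2 - (if I i then 1 else 0)) + max 0 ((if I i then (1:ℝ) else 0) - 1/2)) = 1/2 := by
      intro i; split_ifs <;> norm_num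
    have hB : ∀ j : Fin m, max 0 ((1:ℝ) - ∑ k : Fin 3,
        (if (clause j k).2 then (if I (clause j k).1 then (1:ℝ) else 0)
          else 1 - (if I (clause j k).1 then (1:ℝ) else 0))) = 0 := by
      intro j
      obtain ⟨k, hk⟩ := hI j
      have hnn : ∀ k' ∈ Finset.univ, (0:ℝ) ≤
          (if (clause j k').2 then (if I (clause j k').1 then (1:ℝ) else 0)
            else 1 - (if I (clause j k').1 then (1:ℝ) else 0)) := by
        intro k' _; split_ifs <;> norm_num
      have hone : (if (clause j k).2 then (if I (clause j k).1 then (1:ℝ) else 0)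
            else 1 - (if I (clause j k).1 then (1:ℝ) else 0)) = 1 := by
        by_cases hp : (clause j k).2 = true
        · rw [if_pos hp] at hk ⊢
          simp [hk]
        · rw [if_neg hp] at hk ⊢
          simp only [Bool.not_eq_true'] at hk
          simp [hk]
      have hge : (1:ℝ) ≤ ∑ k' : Fin 3,
          (if (clause j k').2 then (if I (clause j k').1 then (1:ℝ) else 0)
            else 1 - (if I (clause j k').1 then (1:ℝ) else 0)) := by
        calc (1:ℝ) = _ := hone.symm
          _ ≤ _ := Finset.single_le_sum hnn (Finset.mem_univ k)
      exact max_eq_left (by linarith)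
    calc ∑ i : Fin n, (max 0 ((1:ℝ)/2 - (if I i then 1 else 0)) + max 0 ((if I i then (1:ℝ) else 0) - 1/2))
          - ∑ j : Fin m, max 0 ((1:ℝ) - ∑ k : Fin 3,
            (if (clause j k).2 then (if I (clause j k).1 then (1:ℝ) else 0)
              else 1 - (if I (clause j k).1 then (1:ℝ) else 0)))
        = ∑ _i : Fin n, (1:ℝ)/2 - ∑ _j : Fin m, (0:ℝ) := by
          rw [Finset.sum_congr rfl (fun i _ => hA i), Finset.sum_congr rfl (fun j _ => hB j)]
      _ = n/2 := by
          simp [Finset.sum_const, Finset.card_univ, nsmul_eq_mul]; ring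
end
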